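/- Adequacy of the tree rewriting calculus: for any spi-logic L = K⁺ ∪ A with A ⊆ {(4),(m),(J)}, if T ↪*_{TL} T' for modal trees T, T', then F(T) ⊢_L F(T'), where F is the embedding of modal trees into strictly positive formulas. -/

import Mathlib

inductive MTree : Type where
  | node : List ℕ → List (ℕ × MTree) → MTree

namespace MTree

mutual
def numNodes : MTree → ℕ
  | .node _ Γ => 1 + numNodesL Γ
def numNodesL : List (ℕ × MTree) → ℕ
  | [] => 0
  | (_, t) :: Γ => numNodes t + numNodesL Γ
end

mutual
def height : MTree → ℕ
  | .node _ [] => 0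
  | .node _ (p :: Γ) => heightL (p :: Γ) + 1
def heightL : List (ℕ × MTree) → ℕ
  | [] => 0
  | (_, t) :: Γ => max (height t) (heightL Γ)
end

mutual
def width : MTree → ℕ
  | .node _ [] => 1
  | .node _ (p :: Γ) => max (p :: Γ).length (widthL (p :: Γ))
def widthL : List (ℕ × MTree) → ℕ
  | [] => 0
  | (_, t) :: Γ => max (width t) (widthL Γ)
end

def sum : MTree → MTree → MTree
  | .node Δ Γ, .node Δ' Γ' => .node (Δ ++ Δ') (Γ ++ Γ')

inductive IsPos : List ℕ → MTree → Prop where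
  | nil : ∀ t, IsPos [] t
  | cons : ∀ {Δ : List ℕ} {Γ : List (ℕ × MTree)} {i : ℕ} {k : List ℕ}
      (h : i < Γ.length), IsPos k (Γ.get ⟨i, h⟩).2 → IsPos (i :: k) (.node Δ Γ)

def subtree : List ℕ → MTree → MTree
  | [], t => t
  | i :: k, .node Δ Γ =>
    match Γ[i]? with
    | some p => subtree k p.2
    | none => .node Δ Γ

def replace : List ℕ → MTree → MTree → MTree
  | [], _, s => s
  | i :: k, .node Δ Γ, s =>
      .node Δ (Γ.modify i (fun p => (p.1, replace k p.2 s)))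

inductive RhoPlus : MTree → MTree → Prop where
  | mk : ∀ (Δ : List ℕ) (Γ : List (ℕ × MTree)) (i : ℕ) (h : i < Δ.length),
      RhoPlus (.node Δ Γ) (.node (Δ.get ⟨i, h⟩ :: Δ) Γ)

inductive RhoMinus : MTree → MTree → Prop where
  | mk : ∀ (Δ : List ℕ) (Γ : List (ℕ × MTree)) (i : ℕ), i < Δ.length →
      RhoMinus (.node Δ Γ) (.node (Δ.eraseIdx i) Γ)

inductive Sigma' : MTree → MTree → Prop where
  | mk : ∀ (Δ : List ℕ) (Γ : List (ℕ × MTree)) (i j : ℕ)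
      (hi : i < Γ.length) (hj : j < Γ.length), i ≠ j →
      Sigma' (.node Δ Γ) (.node Δ ((Γ.set i (Γ.get ⟨j, hj⟩)).set j (Γ.get ⟨i, hi⟩)))

inductive PiPlus : MTree → MTree → Prop where
  | mk : ∀ (Δ : List ℕ) (Γ : List (ℕ × MTree)) (i : ℕ) (h : i < Γ.length),
      PiPlus (.node Δ Γ) (.node Δ (Γ.get ⟨i, h⟩ :: Γ))

inductive PiMinus : MTree → MTree → Prop where
  | mk : ∀ (Δ : List ℕ) (Γ : List (ℕ × MTree)) (i : ℕ), i < Γ.length →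
      PiMinus (.node Δ Γ) (.node Δ (Γ.eraseIdx i))

inductive FourR : MTree → MTree → Prop where
  | mk : ∀ (Δ : List ℕ) (Γ : List (ℕ × MTree)) (i : ℕ) (h : i < Γ.length)
      (β : ℕ) (s : MTree),
      Γ.get ⟨i, h⟩ = (β, .node [] [(β, s)]) →
      FourR (.node Δ Γ) (.node Δ (Γ.set i (β, s)))

inductive MonoR : MTree → MTree → Prop where
  | mk : ∀ (Δ : List ℕ) (Γ : List (ℕ × MTree)) (i : ℕ) (h : i < Γ.length)
      (α β : ℕ) (s : MTree),
      Γ.get ⟨i, h⟩ = (α, s) → β < α →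
      MonoR (.node Δ Γ) (.node Δ (Γ.set i (β, s)))

inductive JayR : MTree → MTree → Prop where
  | mk : ∀ (Δ : List ℕ) (Γ : List (ℕ × MTree)) (i j : ℕ)
      (hi : i < Γ.length) (hj : j < Γ.length)
      (α β : ℕ) (Δ' : List ℕ) (Γ' : List (ℕ × MTree)) (s : MTree),
      i ≠ j → Γ.get ⟨i, hi⟩ = (α, .node Δ' Γ') → Γ.get ⟨j, hj⟩ = (β, s) → β < α →
      JayR (.node Δ Γ)
        (.node Δ ((Γ.set i (α, .node Δ' (Γ' ++ [(β, s)]))).eraseIdx j))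

inductive Ax : Type where
  | four | mono | jay
deriving DecidableEq

def axRule : Ax → MTree → MTree → Prop
  | .four => FourR
  | .mono => MonoR
  | .jay  => JayR

def rootStep (A : Set Ax) (t t' : MTree) : Prop :=
  RhoPlus t t' ∨ RhoMinus t t' ∨ Sigma' t t' ∨ PiPlus t t' ∨ PiMinus t t' ∨
    ∃ a ∈ A, axRule a t t'

def deepStep (R : MTree → MTree → Prop) (t t' : MTree) : Prop :=
  ∃ k s', IsPos k t ∧ R (subtree k t) s' ∧ t' = replace k t s'

def Rw (A : Set Ax) : MTree → MTree → Prop :=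
  Relation.ReflTransGen (deepStep (rootStep A))

end MTree

inductive SPF : Type where
  | top
  | var : ℕ → SPF
  | dia : ℕ → SPF → SPF
  | and : SPF → SPF → SPF

namespace SPF

def md : SPF → ℕ
  | .top => 0
  | .var _ => 0
  | .dia _ φ => φ.md + 1
  | .and φ ψ => max φ.md ψ.md

def bigAnd : List SPF → SPF
  | [] => .top
  | φ :: l => .and φ (bigAnd l)

def toTree : SPF → MTree
  | .top => .node [] []
  | .var p => .node [p] []
  | .dia α φ => .node [] [(α, toTree φ)]
  | .and φ ψ => (toTree φ).sum (toTree ψ)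

end SPF

namespace MTree
mutual
def toForm : MTree → SPF
  | .node Δ Γ => .and (SPF.bigAnd (Δ.map .var)) (toFormL Γ)
def toFormL : List (ℕ × MTree) → SPF
  | [] => .top
  | (α, t) :: Γ => .and (.dia α (toForm t)) (toFormL Γ)
end
end MTree

inductive Deriv (A : Set MTree.Ax) : SPF → SPF → Prop where
  | refl (φ) : Deriv A φ φ
  | top (φ) : Deriv A φ .top
  | trans {φ ψ χ} : Deriv A φ ψ → Deriv A ψ χ → Deriv A φ χ
  | andE1 (φ ψ) : Deriv A (.and φ ψ) φ
  | andE2 (φ ψ) : Deriv A (.and φ ψ) ψ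
  | andI {φ ψ χ} : Deriv A φ ψ → Deriv A φ χ → Deriv A φ (.and ψ χ)
  | dist {φ ψ} (α : ℕ) : Deriv A φ ψ → Deriv A (.dia α φ) (.dia α ψ)
  | four (α : ℕ) (φ) : MTree.Ax.four ∈ A → Deriv A (.dia α (.dia α φ)) (.dia α φ)
  | mono (α β : ℕ) (φ) : MTree.Ax.mono ∈ A → β < α → Deriv A (.dia α φ) (.dia β φ)
  | jay (α β : ℕ) (φ ψ) : MTree.Ax.jay ∈ A → β < α →
      Deriv A (.and (.dia α φ) (.dia β ψ)) (.dia α (.and φ (.dia β ψ)))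

inductive RuleKind : Type where
  | rhoP | rhoM | sigma | piP | piM | four | mono | jay
deriving DecidableEq

def RuleKind.rel : RuleKind → MTree → MTree → Prop
  | .rhoP => MTree.RhoPlus
  | .rhoM => MTree.RhoMinus
  | .sigma => MTree.Sigma'
  | .piP => MTree.PiPlus
  | .piM => MTree.PiMinus
  | .four => MTree.FourR
  | .mono => MTree.MonoR
  | .jay => MTree.JayR

def listRw : List RuleKind → MTree → MTree → Prop
  | [], t, s => t = s
  | μ :: Ω, t, s => ∃ u, MTree.deepStep μ.rel t u ∧ listRw Ω u s

/-!
At the root, the structural rules only duplicate, permute or drop the conjuncts `p` and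
`⟨α⟩F(S)` of `F(T)`, while (4), (m) and (J) replace one or two of them by a consequence under
the matching axiom, so every root step is derivable. Derivability is preserved by `⟨α⟩` and by
conjunction with the untouched siblings, which lifts this to steps at any position.
-/

namespace Deriv

variable {A : Set MTree.Ax}

theorem bigAnd_of_forall {φ : SPF} {l : List SPF} (h : ∀ ψ ∈ l, Deriv A φ ψ) :
    Deriv A φ (SPF.bigAnd l) := by
  induction l with
  | nil => exact .top _
  | cons ψ l ih => exact .andI (h ψ List.mem_cons_self) (ih fun χ hχ => h χ (.tail _ hχ))

theorem bigAnd_of_mem {l : List SPF} {ψ : SPF} (h : ψ ∈ l) : Deriv A (SPF.bigAnd l) ψ := by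
  induction h with
  | head => exact .andE1 _ _
  | tail _ _ ih => exact .trans (.andE2 _ _) ih

end Deriv

theorem List.set_subset {α : Type*} {l m : List α} {a : α} (i : ℕ) (hl : l ⊆ m)
    (ha : a ∈ m) : l.set i a ⊆ m :=
  fun _ hb => (List.mem_or_eq_of_mem_set hb).elim (hl ·) (· ▸ ha)

namespace MTree

variable {A : Set Ax}

theorem deriv_toFormL_dia_of_mem {Γ : List (ℕ × MTree)} {p : ℕ × MTree} (h : p ∈ Γ) :
    Deriv A (toFormL Γ) (.dia p.1 p.2.toForm) := by
  induction h with
  | head => exact .andE1 _ _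
  | tail _ _ ih => exact .trans (.andE2 _ _) ih

theorem deriv_toFormL_of_forall {φ : SPF} {Γ : List (ℕ × MTree)}
    (h : ∀ p ∈ Γ, Deriv A φ (.dia p.1 p.2.toForm)) : Deriv A φ (toFormL Γ) := by
  induction Γ with
  | nil => exact .top _
  | cons p Γ ih => exact .andI (h p List.mem_cons_self) (ih fun q hq => h q (.tail _ hq))

theorem deriv_node_dia_of_mem {Δ : List ℕ} {Γ : List (ℕ × MTree)} {p : ℕ × MTree}
    (h : p ∈ Γ) : Deriv A (node Δ Γ).toForm (.dia p.1 p.2.toForm) :=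
  .trans (.andE2 _ _) (deriv_toFormL_dia_of_mem h)

theorem deriv_node_dia_of_get {Δ : List ℕ} {Γ : List (ℕ × MTree)} {i : ℕ}
    (hi : i < Γ.length) {α : ℕ} {s : MTree} (h : Γ.get ⟨i, hi⟩ = (α, s)) :
    Deriv A (node Δ Γ).toForm (.dia α s.toForm) := by
  simpa only [h] using deriv_node_dia_of_mem (A := A) (Δ := Δ) (List.get_mem Γ ⟨i, hi⟩)

theorem deriv_node_of_forall {Δ Δ' : List ℕ} {Γ Γ' : List (ℕ × MTree)} (hΔ : Δ' ⊆ Δ)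
    (hΓ : ∀ p ∈ Γ', Deriv A (node Δ Γ).toForm (.dia p.1 p.2.toForm)) :
    Deriv A (node Δ Γ).toForm (node Δ' Γ').toForm := by
  refine .andI (Deriv.bigAnd_of_forall ?_) (deriv_toFormL_of_forall hΓ)
  intro ψ hψ
  obtain ⟨q, hq, rfl⟩ := List.mem_map.1 hψ
  exact .trans (.andE1 _ _) (Deriv.bigAnd_of_mem (List.mem_map_of_mem (hΔ hq)))

theorem deriv_node_of_subset {Δ Δ' : List ℕ} {Γ Γ' : List (ℕ × MTree)} (hΔ : Δ' ⊆ Δ)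
    (hΓ : Γ' ⊆ Γ) : Deriv A (node Δ Γ).toForm (node Δ' Γ').toForm :=
  deriv_node_of_forall hΔ fun _ hp => deriv_node_dia_of_mem (hΓ hp)

theorem deriv_node_set {Δ : List ℕ} {Γ : List (ℕ × MTree)} (i : ℕ) {q : ℕ × MTree}
    (hq : Deriv A (node Δ Γ).toForm (.dia q.1 q.2.toForm)) :
    Deriv A (node Δ Γ).toForm (node Δ (Γ.set i q)).toForm :=
  deriv_node_of_forall (List.Subset.refl _) fun _ hp =>
    (List.mem_or_eq_of_mem_set hp).elim deriv_node_dia_of_mem (· ▸ hq)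

theorem deriv_node_append_singleton (Δ : List ℕ) (Γ : List (ℕ × MTree)) (β : ℕ)
    (s : MTree) :
    Deriv A (.and (node Δ Γ).toForm (.dia β s.toForm)) (node Δ (Γ ++ [(β, s)])).toForm := by
  refine .andI (.trans (.andE1 _ _) (.andE1 _ _)) (deriv_toFormL_of_forall fun p hp => ?_)
  rcases List.mem_append.1 hp with hp | hp
  · exact .trans (.andE1 _ _) (deriv_node_dia_of_mem hp)
  · rw [List.mem_singleton.1 hp]
    exact .andE2 _ _

theorem RhoPlus.deriv_toForm {t t' : MTree} (h : RhoPlus t t') :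
    Deriv A t.toForm t'.toForm := by
  obtain ⟨Δ, Γ, i, hi⟩ := h
  exact deriv_node_of_subset (List.cons_subset.2 ⟨List.get_mem _ _, List.Subset.refl _⟩)
    (List.Subset.refl _)

theorem RhoMinus.deriv_toForm {t t' : MTree} (h : RhoMinus t t') :
    Deriv A t.toForm t'.toForm := by
  obtain ⟨Δ, Γ, i, -⟩ := h
  exact deriv_node_of_subset List.eraseIdx_subset (List.Subset.refl _)

theorem Sigma'.deriv_toForm {t t' : MTree} (h : Sigma' t t') :
    Deriv A t.toForm t'.toForm := by
  obtain ⟨Δ, Γ, i, j, hi, hj, -⟩ := h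
  exact deriv_node_of_subset (List.Subset.refl _) <|
    List.set_subset j (List.set_subset i (List.Subset.refl _) (List.get_mem _ _)) (List.get_mem _ _)

theorem PiPlus.deriv_toForm {t t' : MTree} (h : PiPlus t t') :
    Deriv A t.toForm t'.toForm := by
  obtain ⟨Δ, Γ, i, hi⟩ := h
  exact deriv_node_of_subset (List.Subset.refl _)
    (List.cons_subset.2 ⟨List.get_mem _ _, List.Subset.refl _⟩)

theorem PiMinus.deriv_toForm {t t' : MTree} (h : PiMinus t t') :
    Deriv A t.toForm t'.toForm := by
  obtain ⟨Δ, Γ, i, -⟩ := h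
  exact deriv_node_of_subset (List.Subset.refl _) List.eraseIdx_subset

theorem FourR.deriv_toForm (ha : Ax.four ∈ A) {t t' : MTree} (h : FourR t t') :
    Deriv A t.toForm t'.toForm := by
  obtain ⟨Δ, Γ, i, hi, β, s, hget⟩ := h
  have hββ : Deriv A (node Δ Γ).toForm (.dia β (.dia β s.toForm)) :=
    .trans (deriv_node_dia_of_get hi hget)
      (.dist β (deriv_node_dia_of_mem (p := (β, s)) List.mem_cons_self))
  exact deriv_node_set i (.trans hββ (.four β _ ha))

theorem MonoR.deriv_toForm (ha : Ax.mono ∈ A) {t t' : MTree} (h : MonoR t t') :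
    Deriv A t.toForm t'.toForm := by
  obtain ⟨Δ, Γ, i, hi, α, β, s, hget, hβα⟩ := h
  exact deriv_node_set i (.trans (deriv_node_dia_of_get hi hget) (.mono α β _ ha hβα))

theorem JayR.deriv_toForm (ha : Ax.jay ∈ A) {t t' : MTree} (h : JayR t t') :
    Deriv A t.toForm t'.toForm := by
  obtain ⟨Δ, Γ, i, j, hi, hj, α, β, Δ', Γ', s, -, hgi, hgj, hβα⟩ := h
  have hJ : Deriv A (node Δ Γ).toForm (.dia α (node Δ' (Γ' ++ [(β, s)])).toForm) :=
    .trans (.andI (deriv_node_dia_of_get hi hgi) (deriv_node_dia_of_get hj hgj))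
      (.trans (.jay α β _ _ ha hβα) (.dist α (deriv_node_append_singleton Δ' Γ' β s)))
  exact .trans (deriv_node_set (q := (α, _)) i hJ)
    (deriv_node_of_subset (List.Subset.refl _) List.eraseIdx_subset)

theorem deriv_toForm_of_axRule {a : Ax} (ha : a ∈ A) {t t' : MTree} (h : axRule a t t') :
    Deriv A t.toForm t'.toForm := by
  cases a with
  | four => exact FourR.deriv_toForm ha h
  | mono => exact MonoR.deriv_toForm ha h
  | jay => exact JayR.deriv_toForm ha h

theorem deriv_toForm_of_rootStep {t t' : MTree} (h : rootStep A t t') :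
    Deriv A t.toForm t'.toForm := by
  rcases h with h | h | h | h | h | ⟨a, ha, h⟩
  exacts [h.deriv_toForm, h.deriv_toForm, h.deriv_toForm, h.deriv_toForm, h.deriv_toForm,
    deriv_toForm_of_axRule ha h]

theorem subtree_cons_node {i : ℕ} (k : List ℕ) (Δ : List ℕ) {Γ : List (ℕ × MTree)}
    (hi : i < Γ.length) : subtree (i :: k) (node Δ Γ) = subtree k (Γ.get ⟨i, hi⟩).2 := by
  simp [subtree, List.getElem?_eq_getElem hi]

theorem deriv_toForm_replace {k : List ℕ} {t s : MTree} (hk : IsPos k t)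
    (h : Deriv A (subtree k t).toForm s.toForm) : Deriv A t.toForm (replace k t s).toForm := by
  induction hk with
  | nil => exact h
  | @cons Δ Γ i k hi _ ih =>
    rw [subtree_cons_node k Δ hi] at h
    rw [replace, List.modify_eq_set_get _ hi]
    exact deriv_node_set i (.trans (deriv_node_dia_of_mem (List.get_mem _ _)) (.dist _ (ih h)))

theorem deriv_toForm_of_deepStep {R : MTree → MTree → Prop}
    (hR : ∀ {t t'}, R t t' → Deriv A t.toForm t'.toForm) {t t' : MTree}
    (h : deepStep R t t') : Deriv A t.toForm t'.toForm := by
  obtain ⟨k, s, hk, hs, rfl⟩ := h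
  exact deriv_toForm_replace hk (hR hs)

end MTree

theorem stmt16 (A : Set MTree.Ax) (t t' : MTree) (h : MTree.Rw A t t') :
    Deriv A (MTree.toForm t) (MTree.toForm t') := by
  induction h with
  | refl => exact .refl _
  | tail _ hstep ih =>
    exact .trans ih (MTree.deriv_toForm_of_deepStep MTree.deriv_toForm_of_rootStep hstep)
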